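/- Let λ, Λ, δ > 0 with λ ≤ Λ. There exists C > 0 such that for all l > 1, the minimal rescaled energy c_l := inf_u (1/l) ∫₀^l ∫₀^l |u(x)-u(y)|²/|x-y|² dx dy, taken over Lipschitz u : [0,l] → ℝ with u' ∈ {λ, -Λ} a.e. and with the set {u' = -Λ} a disjoint union of intervals of length δ, satisfies c_l ≤ C. -/

import Mathlib

open MeasureTheory Set

lemma sawf_window {T : ℝ} (hT : 0 < T) (t : ℝ) :
    T * ⌊t / T⌋ ≤ t ∧ t < T * ⌊t / T⌋ + T := by
  constructor
  · calc T * ⌊t / T⌋ = (⌊t / T⌋ : ℝ) * T := by ring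
    _ ≤ t := by rw [← le_div_iff₀ hT]; exact Int.floor_le _
  · have h2 : t < ((⌊t / T⌋ : ℝ) + 1) * T := by
      rw [← div_lt_iff₀ hT]; exact Int.lt_floor_add_one _
    nlinarith

lemma sawf_sub {δ T : ℝ} (hδ : 0 < δ) (hδT : δ ≤ T) (hT : 0 < T) {a b : ℝ} (hab : a ≤ b) :
    0 ≤ (δ * ⌊b / T⌋ + min δ (b - T * ⌊b / T⌋)) - (δ * ⌊a / T⌋ + min δ (a - T * ⌊a / T⌋)) ∧
    (δ * ⌊b / T⌋ + min δ (b - T * ⌊b / T⌋)) - (δ * ⌊a / T⌋ + min δ (a - T * ⌊a / T⌋)) ≤ b - a := by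
  have hmn : (⌊a / T⌋ : ℤ) ≤ ⌊b / T⌋ := Int.floor_le_floor (by gcongr)
  obtain ⟨ha1, ha2⟩ := sawf_window hT a
  obtain ⟨hb1, hb2⟩ := sawf_window hT b
  set m : ℤ := ⌊a / T⌋
  set n : ℤ := ⌊b / T⌋
  set ra : ℝ := a - T * m with hra
  set rb : ℝ := b - T * n with hrb
  have hmnR : (m : ℝ) ≤ n := by exact_mod_cast hmn
  rcases eq_or_lt_of_le hmn with h | h
  · have hmn' : (m : ℝ) = (n : ℝ) := by exact_mod_cast h
    have hrab : ra ≤ rb := by simp only [hra, hrb, hmn']; linarith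
    rcases le_total ra δ with h1 | h1 <;> rcases le_total rb δ with h2 | h2 <;>
      constructor <;> simp [min_eq_left, min_eq_right, h1, h2, hmn'] <;> nlinarith
  · have h1 : (m : ℝ) + 1 ≤ n := by exact_mod_cast h
    have e1 : min δ ra ≤ δ := min_le_left _ _
    have e2 : (0:ℝ) ≤ min δ rb := le_min hδ.le (by linarith)
    have e3 : min δ rb ≤ rb := min_le_right _ _
    have e4 : ra - min δ ra ≤ T - δ := by
      rcases le_total ra δ with h4 | h4
      · rw [min_eq_right h4]; linarith
      · rw [min_eq_left h4]; linarith
    constructor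
    · nlinarith
    · have hba : b - a = T * ((n:ℝ) - m) + rb - ra := by simp [hra, hrb]; ring
      have : (T - δ) ≤ (T - δ) * ((n:ℝ) - m) := by nlinarith
      nlinarith

lemma saw_bound {lam Lam δ T : ℝ} (hlam : 0 < lam) (hLam : lam ≤ Lam) (hδ : 0 < δ)
    (hT : 0 < T) (hkey : lam * T = (lam + Lam) * δ) (t : ℝ) :
    -(Lam * δ) ≤ lam * t - (lam + Lam) * (δ * ⌊t / T⌋ + min δ (t - T * ⌊t / T⌋)) ∧
    lam * t - (lam + Lam) * (δ * ⌊t / T⌋ + min δ (t - T * ⌊t / T⌋)) ≤ 0 := by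
  obtain ⟨h1, h2⟩ := sawf_window hT t
  set k : ℤ := ⌊t / T⌋
  set r : ℝ := t - T * k with hr
  have ht : t = T * k + r := by rw [hr]; ring
  have key2 : lam * t - (lam + Lam) * (δ * k + min δ r)
      = lam * r - (lam + Lam) * min δ r := by
    rw [ht]; linear_combination (k : ℝ) * hkey
  rw [key2]
  have hδT : δ ≤ T := by nlinarith
  rcases le_total r δ with h4 | h4
  · rw [min_eq_right h4]; constructor <;> nlinarith
  · rw [min_eq_left h4]; constructor <;> nlinarith

lemma tail_integrable {M δ : ℝ} (hδ : 0 < δ) :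
    IntegrableOn (fun t : ℝ => M ^ 2 / t ^ 2) (Ici δ) := by
  rw [integrableOn_Ici_iff_integrableOn_Ioi]
  have h := (integrableOn_Ioi_rpow_of_lt (by norm_num : (-2:ℝ) < -1) hδ).const_mul (M ^ 2)
  apply (IntegrableOn.congr_fun h · measurableSet_Ioi)
  intro t ht
  have ht0 : 0 < t := hδ.trans ht
  show M ^ 2 * t ^ (-2:ℝ) = M ^ 2 / t ^ 2
  rw [show ((-2:ℝ):ℝ) = -((2:ℕ):ℝ) by norm_num, Real.rpow_neg ht0.le, Real.rpow_natCast,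
    div_eq_mul_inv]

lemma tail_integral {M δ : ℝ} (hδ : 0 < δ) :
    ∫ t in Ici δ, M ^ 2 / t ^ 2 = M ^ 2 / δ := by
  rw [integral_Ici_eq_integral_Ioi]
  rw [setIntegral_congr_fun measurableSet_Ioi
    (g := fun t : ℝ => M ^ 2 * t ^ (-2:ℝ)) ?_]
  · rw [MeasureTheory.integral_const_mul, integral_Ioi_rpow_of_lt (by norm_num) hδ]
    rw [show (-2:ℝ) + 1 = -1 by norm_num, Real.rpow_neg_one]
    field_simp
  · intro t ht
    have ht0 : 0 < t := hδ.trans ht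
    show M ^ 2 / t ^ 2 = M ^ 2 * t ^ (-2:ℝ)
    rw [show ((-2:ℝ):ℝ) = -((2:ℕ):ℝ) by norm_num, Real.rpow_neg ht0.le, Real.rpow_natCast,
      div_eq_mul_inv]

lemma right_tail {M δ : ℝ} (hδ : 0 < δ) (x : ℝ) :
    IntegrableOn (fun y : ℝ => M ^ 2 / (y - x) ^ 2) (Ici (x + δ)) ∧
    (∫ y in Ici (x + δ), M ^ 2 / (y - x) ^ 2) = M ^ 2 / δ := by
  have key : (Ici (x + δ)).indicator (fun y : ℝ => M ^ 2 / (y - x) ^ 2)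
      = fun y => (Ici δ).indicator (fun t : ℝ => M ^ 2 / t ^ 2) (y - x) := by
    funext y
    simp only [Set.indicator_apply, mem_Ici]
    congr 1
    simp only [eq_iff_iff]
    constructor <;> intro <;> linarith
  have hi : Integrable ((Ici δ).indicator (fun t : ℝ => M ^ 2 / t ^ 2)) :=
    (integrable_indicator_iff measurableSet_Ici).mpr (tail_integrable hδ)
  constructor
  · rw [← integrable_indicator_iff measurableSet_Ici, key]
    exact hi.comp_sub_right x
  · rw [← MeasureTheory.integral_indicator measurableSet_Ici, key,
      MeasureTheory.integral_sub_right_eq_self _ x,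
      MeasureTheory.integral_indicator measurableSet_Ici]
    exact tail_integral hδ

lemma left_tail {M δ : ℝ} (hδ : 0 < δ) (x : ℝ) :
    IntegrableOn (fun y : ℝ => M ^ 2 / (y - x) ^ 2) (Iic (x - δ)) ∧
    (∫ y in Iic (x - δ), M ^ 2 / (y - x) ^ 2) = M ^ 2 / δ := by
  have key : (Iic (x - δ)).indicator (fun y : ℝ => M ^ 2 / (y - x) ^ 2)
      = fun y => ((Ici δ).indicator (fun t : ℝ => M ^ 2 / t ^ 2) ∘ Neg.neg) (y - x) := by
    funext y
    simp only [Set.indicator_apply, mem_Ici, mem_Iic, Function.comp]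
    by_cases h : y ≤ x - δ
    · rw [if_pos h, if_pos (by linarith : δ ≤ -(y - x))]; ring_nf
    · rw [if_neg h, if_neg (fun hc : δ ≤ -(y - x) => h (by linarith))]
  have hi : Integrable ((Ici δ).indicator (fun t : ℝ => M ^ 2 / t ^ 2)) :=
    (integrable_indicator_iff measurableSet_Ici).mpr (tail_integrable hδ)
  have hin : Integrable ((Ici δ).indicator (fun t : ℝ => M ^ 2 / t ^ 2) ∘ Neg.neg) :=
    hi.comp_neg
  constructor
  · rw [← integrable_indicator_iff measurableSet_Iic, key]
    exact hin.comp_sub_right x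
  · rw [← MeasureTheory.integral_indicator measurableSet_Iic, key,
      MeasureTheory.integral_sub_right_eq_self _ x]
    have h2 : ∫ y, ((Ici δ).indicator (fun t : ℝ => M ^ 2 / t ^ 2) ∘ Neg.neg) y
        = ∫ y, (Ici δ).indicator (fun t : ℝ => M ^ 2 / t ^ 2) y :=
      MeasureTheory.integral_neg_eq_self _ _
    rw [h2, MeasureTheory.integral_indicator measurableSet_Ici]
    exact tail_integral hδ


/-- The admissible class `𝒰_l`: displacements induced by admissible dislocation
configurations: finitely many points in `(-δ/2, l+δ/2)` whose surrounding intervals of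
length `δ` are mutually disjoint; `u` is continuous, has slope `-Λ` inside the dislocation
cores and slope `λ` outside them (away from the finitely many kink points). -/
def AdmissibleDispl (lam Lam δ l : ℝ) (u : ℝ → ℝ) : Prop :=
  ∃ N : ℕ, ∃ x : Fin N → ℝ,
    (∀ i, x i ∈ Set.Ioo (-(δ / 2)) (l + δ / 2)) ∧
    (∀ i j, i ≠ j → δ ≤ |x i - x j|) ∧
    ContinuousOn u (Set.Icc 0 l) ∧
    (∀ t ∈ Set.Ioo (0:ℝ) l, (∃ i, t ∈ Set.Ioo (x i - δ / 2) (x i + δ / 2)) →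
      HasDerivAt u (-Lam) t) ∧
    (∀ t ∈ Set.Ioo (0:ℝ) l, (∀ i, t ∉ Set.Icc (x i - δ / 2) (x i + δ / 2)) →
      HasDerivAt u lam t)

set_option maxHeartbeats 1000000 in
/-- for `0 < λ ≤ Λ` and `δ > 0` there is `C > 0` such that for every
`l > 1` the minimal rescaled energy
`c_l = inf { (1/l)∫₀^l∫₀^l |u(x)-u(y)|²/|x-y|² : u ∈ 𝒰_l }` satisfies `c_l ≤ C`. -/
theorem stmt16 (lam Lam δ : ℝ) (hlam : 0 < lam) (hLam : lam ≤ Lam) (hδ : 0 < δ) :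
    ∃ C > 0, ∀ l : ℝ, 1 < l →
      sInf {e : ℝ | ∃ u : ℝ → ℝ, AdmissibleDispl lam Lam δ l u ∧
        e = (1 / l) * ∫ x in Set.Ioo (0:ℝ) l, ∫ y in Set.Ioo (0:ℝ) l,
          (u x - u y) ^ 2 / (x - y) ^ 2} ≤ C := by
  have hLam0 : 0 < Lam := lt_of_lt_of_le hlam hLam
  refine ⟨4 * Lam ^ 2 * δ, by positivity, fun l hl => ?_⟩
  have hl0 : 0 < l := by linarith
  set T : ℝ := δ * (lam + Lam) / lam with hTdef
  have hsum : 0 < lam + Lam := by linarith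
  have hT0 : 0 < T := by rw [hTdef]; positivity
  have hkey : lam * T = (lam + Lam) * δ := by rw [hTdef]; field_simp
  have hδT : δ < T := by nlinarith
  set f : ℝ → ℝ := fun t => δ * ⌊t / T⌋ + min δ (t - T * ⌊t / T⌋) with hfdef
  set u : ℝ → ℝ := fun t => lam * t - (lam + Lam) * f t with hudef
  -- Lipschitz bound
  have hulip : ∀ a b : ℝ, |u a - u b| ≤ Lam * |a - b| := by
    have key : ∀ a b : ℝ, a ≤ b → |u a - u b| ≤ Lam * |a - b| := by
      intro a b hab
      obtain ⟨h1', h2'⟩ := sawf_sub hδ hδT.le hT0 hab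
      have h1 : 0 ≤ f b - f a := h1'
      have h2 : f b - f a ≤ b - a := h2'
      have hdiff : u a - u b = -(lam * (b - a)) + (lam + Lam) * (f b - f a) := by
        simp only [hudef]; ring
      rw [abs_sub_comm a b, abs_of_nonneg (by linarith : (0:ℝ) ≤ b - a), hdiff]
      rw [abs_le]
      constructor <;> nlinarith
    intro a b
    rcases le_total a b with h | h
    · exact key a b h
    · rw [abs_sub_comm (u a), abs_sub_comm a]; exact key b a h
  have hucont : Continuous u := by
    apply LipschitzWith.continuous (K := Real.toNNReal Lam)
    apply LipschitzWith.of_dist_le_mul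
    intro a b
    rw [Real.dist_eq, Real.dist_eq, Real.coe_toNNReal Lam hLam0.le]
    exact hulip a b
  have hubound : ∀ t : ℝ, -(Lam * δ) ≤ u t ∧ u t ≤ 0 := fun t =>
    saw_bound hlam hLam hδ hT0 hkey t
  -- admissibility
  have hadm : AdmissibleDispl lam Lam δ l u := by
    have hceil : (0:ℤ) < ⌈l / T⌉ := Int.ceil_pos.mpr (by positivity)
    set N : ℕ := (⌈l / T⌉).toNat with hN
    have hNceil : ((N : ℤ) : ℝ) = ((⌈l / T⌉ : ℤ) : ℝ) := by
      rw [hN, Int.toNat_of_nonneg hceil.le]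
    refine ⟨N, fun i => (i : ℝ) * T + δ / 2, ?_, ?_, hucont.continuousOn, ?_, ?_⟩
    · intro i
      constructor
      · have : (0:ℝ) ≤ (i : ℝ) * T := by positivity
        simp only [mem_Ioo]; linarith
      · have hiN : ((i : ℕ) : ℤ) < ⌈l / T⌉ := by
          rw [← Int.toNat_of_nonneg hceil.le]; exact_mod_cast i.2
        have h1 : ((i : ℕ) : ℝ) ≤ ((⌈l / T⌉ : ℤ) : ℝ) - 1 := by
          have h0 : ((i : ℕ) : ℤ) ≤ ⌈l / T⌉ - 1 := by omega
          have h0' : (((i : ℕ) : ℤ) : ℝ) ≤ ((⌈l / T⌉ - 1 : ℤ) : ℝ) := by exact_mod_cast h0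
          push_cast at h0' ⊢; linarith
        have h2 : ((⌈l / T⌉ : ℤ) : ℝ) < l / T + 1 := Int.ceil_lt_add_one _
        have h3 : ((i : ℕ) : ℝ) < l / T := by linarith
        have h4 : ((i : ℕ) : ℝ) * T < l := by
          rw [← lt_div_iff₀ hT0] at *; exact h3
        linarith
    · intro i j hij
      have hne : ((i : ℕ) : ℤ) ≠ ((j : ℕ) : ℤ) := by
        intro h
        exact hij (Fin.ext (by exact_mod_cast h))
      have h1 : (1:ℝ) ≤ |((i : ℕ) : ℝ) - ((j : ℕ) : ℝ)| := by
        have h0 : (1:ℤ) ≤ |((i : ℕ) : ℤ) - ((j : ℕ) : ℤ)| := Int.one_le_abs (sub_ne_zero.mpr hne)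
        have h0' : ((1:ℤ):ℝ) ≤ ((|((i : ℕ) : ℤ) - ((j : ℕ) : ℤ)| : ℤ) : ℝ) := by exact_mod_cast h0
        rw [Int.cast_abs] at h0'
        push_cast at h0' ⊢
        linarith
      have heq : ((i : ℕ) : ℝ) * T + δ / 2 - (((j : ℕ) : ℝ) * T + δ / 2)
          = (((i : ℕ) : ℝ) - ((j : ℕ) : ℝ)) * T := by ring
      rw [heq, abs_mul, abs_of_pos hT0]
      nlinarith
    · rintro t ht ⟨i, hti⟩
      simp only [mem_Ioo] at hti
      have h1 : (i : ℝ) * T < t := by linarith [hti.1]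
      have h2 : t < (i : ℝ) * T + δ := by linarith [hti.2]
      have hfl : ∀ s ∈ Ioo ((i : ℝ) * T) ((i : ℝ) * T + δ), (⌊s / T⌋ : ℤ) = (i : ℕ) := by
        intro s hs
        rw [Int.floor_eq_iff]
        constructor
        · push_cast
          rw [le_div_iff₀ hT0]; nlinarith [hs.1]
        · push_cast
          rw [div_lt_iff₀ hT0]; nlinarith [hs.2]
      have haff : HasDerivAt
          (fun s => lam * s - (lam + Lam) * (δ * ((i : ℕ) : ℝ) + (s - T * ((i : ℕ) : ℝ))))
          (-Lam) t := by
        have ha : HasDerivAt (fun s : ℝ => lam * s) (lam * 1) t :=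
          (hasDerivAt_id t).const_mul lam
        have hb : HasDerivAt
            (fun s : ℝ => (lam + Lam) * (δ * ((i : ℕ) : ℝ) + (s - T * ((i : ℕ) : ℝ))))
            ((lam + Lam) * 1) t :=
          (((hasDerivAt_id t).sub_const _).const_add _).const_mul _
        have hab := ha.sub hb
        exact hab.congr_deriv (by ring)
      apply haff.congr_of_eventuallyEq
      apply Filter.eventuallyEq_of_mem (Ioo_mem_nhds h1 h2)
      intro s hs
      have hfls := hfl s hs
      show u s = _
      simp only [hudef, hfdef, hfls]
      push_cast
      rw [min_eq_right (by simp only [mem_Ioo] at hs; linarith [hs.2] : s - T * ((i : ℕ) : ℝ) ≤ δ)]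
    · intro t ht hout
      simp only [mem_Ioo] at ht
      have hceilN : ((N : ℤ) : ℝ) = ((⌈l / T⌉ : ℤ) : ℝ) := hNceil
      set k : ℤ := ⌊t / T⌋ with hk
      obtain ⟨hk1, hk2⟩ := sawf_window hT0 t
      have hk0 : 0 ≤ k := Int.floor_nonneg.mpr (div_nonneg ht.1.le hT0.le)
      have hkN : k < (N : ℤ) := by
        have h1 : (k : ℝ) ≤ t / T := Int.floor_le _
        have h2 : t / T < l / T := by gcongr; exact ht.2
        have h3 : l / T ≤ ((⌈l / T⌉ : ℤ) : ℝ) := Int.le_ceil _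
        have h4 : (k : ℝ) < ((N : ℤ) : ℝ) := by rw [hNceil]; linarith
        exact_mod_cast h4
      have hiN' : k.toNat < N := by omega
      have hcast : ((k.toNat : ℕ) : ℝ) = (k : ℝ) := by
        have h5 : ((k.toNat : ℤ) : ℝ) = ((k : ℤ) : ℝ) := by
          rw [Int.toNat_of_nonneg hk0]
        push_cast at h5 ⊢
        exact h5
      have hnotmem : t ∉ Icc (((k.toNat : ℕ) : ℝ) * T + δ / 2 - δ / 2)
          (((k.toNat : ℕ) : ℝ) * T + δ / 2 + δ / 2) := hout ⟨k.toNat, hiN'⟩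
      rw [hcast, mem_Icc, not_and_or] at hnotmem
      have htlow : (k : ℝ) * T + δ < t := by
        rcases hnotmem with h | h
        · exfalso; apply h; rw [mul_comm] at hk1 ⊢; linarith
        · rw [not_le] at h; linarith
      have hthigh : t < (k : ℝ) * T + T := by rw [mul_comm]; linarith [hk2]
      have hfl : ∀ s ∈ Ioo ((k : ℝ) * T + δ) ((k : ℝ) * T + T), (⌊s / T⌋ : ℤ) = k := by
        intro s hs
        rw [Int.floor_eq_iff]
        constructor
        · rw [le_div_iff₀ hT0]; simp only [mem_Ioo] at hs; linarith [hs.1]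
        · push_cast
          rw [div_lt_iff₀ hT0]; simp only [mem_Ioo] at hs; nlinarith [hs.2]
      have haff : HasDerivAt
          (fun s => lam * s - (lam + Lam) * (δ * (k : ℝ) + δ)) lam t := by
        have ha : HasDerivAt (fun s : ℝ => lam * s) (lam * 1) t :=
          (hasDerivAt_id t).const_mul lam
        have hab := ha.sub_const ((lam + Lam) * (δ * (k : ℝ) + δ))
        exact hab.congr_deriv (by ring)
      apply haff.congr_of_eventuallyEq
      apply Filter.eventuallyEq_of_mem (Ioo_mem_nhds htlow hthigh)
      intro s hs
      have hfls := hfl s hs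
      show u s = _
      simp only [hudef, hfdef, hfls]
      rw [min_eq_left (by simp only [mem_Ioo] at hs; linarith [hs.1] : δ ≤ s - T * (k : ℝ))]
  -- energy estimate
  have hg0 : ∀ x y : ℝ, 0 ≤ (u x - u y) ^ 2 / (x - y) ^ 2 := fun x y =>
    div_nonneg (sq_nonneg _) (sq_nonneg _)
  have hgL : ∀ x y : ℝ, (u x - u y) ^ 2 / (x - y) ^ 2 ≤ Lam ^ 2 := by
    intro x y
    rcases eq_or_ne x y with h | h
    · simp [h]; positivity
    · have hne : x - y ≠ 0 := sub_ne_zero.mpr h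
      have hxy : (0:ℝ) < (x - y) ^ 2 := by positivity
      rw [div_le_iff₀ hxy]
      have h2 : |u x - u y| ≤ Lam * |x - y| := hulip x y
      have h3 : (u x - u y) ^ 2 ≤ (Lam * |x - y|) ^ 2 := by
        rw [← sq_abs (u x - u y)]
        exact pow_le_pow_left₀ (abs_nonneg _) h2 2
      calc (u x - u y) ^ 2 ≤ (Lam * |x - y|) ^ 2 := h3
      _ = Lam ^ 2 * (x - y) ^ 2 := by rw [mul_pow, sq_abs]
  have hgM : ∀ x y : ℝ, (u x - u y) ^ 2 ≤ (Lam * δ) ^ 2 := by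
    intro x y
    obtain ⟨a1, a2⟩ := hubound x
    obtain ⟨b1, b2⟩ := hubound y
    have habs : |u x - u y| ≤ Lam * δ := abs_le.mpr ⟨by linarith, by linarith⟩
    calc (u x - u y) ^ 2 = |u x - u y| ^ 2 := (sq_abs _).symm
    _ ≤ (Lam * δ) ^ 2 := pow_le_pow_left₀ (abs_nonneg _) habs 2
  have hmeasg : Measurable (fun p : ℝ × ℝ => (u p.1 - u p.2) ^ 2 / (p.1 - p.2) ^ 2) := by
    apply Measurable.div
    · exact (((hucont.comp continuous_fst).sub (hucont.comp continuous_snd)).measurable).pow_const 2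
    · exact ((continuous_fst.sub continuous_snd).measurable).pow_const 2
  have hmeasgx : ∀ x : ℝ, Measurable (fun y => (u x - u y) ^ 2 / (x - y) ^ 2) := by
    intro x
    apply Measurable.div
    · exact ((continuous_const.sub hucont).measurable).pow_const 2
    · exact ((continuous_const.sub continuous_id).measurable).pow_const 2
  have hIntg : ∀ x : ℝ, IntegrableOn (fun y => (u x - u y) ^ 2 / (x - y) ^ 2) (Ioo 0 l) := by
    intro x
    refine Integrable.mono' (g := fun _ => Lam ^ 2)
      (integrableOn_const (C := Lam ^ 2) measure_Ioo_lt_top.ne)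
      ((hmeasgx x).aestronglyMeasurable) ?_
    refine ae_of_all _ fun y => ?_
    rw [Real.norm_eq_abs, abs_of_nonneg (hg0 x y)]
    exact hgL x y
  have hF : ∀ x : ℝ, (∫ y in Ioo 0 l, (u x - u y) ^ 2 / (x - y) ^ 2) ≤ 4 * Lam ^ 2 * δ := by
    intro x
    have hsplit := integral_inter_add_diff (s := Ioo 0 l) (t := Ioo (x - δ) (x + δ))
      (f := fun y => (u x - u y) ^ 2 / (x - y) ^ 2) measurableSet_Ioo (hIntg x)
    have hA : (∫ y in Ioo 0 l ∩ Ioo (x - δ) (x + δ), (u x - u y) ^ 2 / (x - y) ^ 2)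
        ≤ Lam ^ 2 * (2 * δ) := by
      have h1 : ‖∫ y in Ioo 0 l ∩ Ioo (x - δ) (x + δ), (u x - u y) ^ 2 / (x - y) ^ 2‖
          ≤ Lam ^ 2 * (volume (Ioo 0 l ∩ Ioo (x - δ) (x + δ))).toReal := by
        apply norm_setIntegral_le_of_norm_le_const
          (lt_of_le_of_lt (measure_mono inter_subset_left) measure_Ioo_lt_top)
        · intro y _
          rw [Real.norm_eq_abs, abs_of_nonneg (hg0 x y)]
          exact hgL x y
      have h2 : (volume (Ioo 0 l ∩ Ioo (x - δ) (x + δ))).toReal ≤ 2 * δ := by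
        have h3 : volume (Ioo 0 l ∩ Ioo (x - δ) (x + δ)) ≤ volume (Ioo (x - δ) (x + δ)) :=
          measure_mono inter_subset_right
        rw [Real.volume_Ioo] at h3
        calc (volume (Ioo 0 l ∩ Ioo (x - δ) (x + δ))).toReal
            ≤ (ENNReal.ofReal (x + δ - (x - δ))).toReal :=
              ENNReal.toReal_mono ENNReal.ofReal_ne_top h3
        _ = 2 * δ := by rw [ENNReal.toReal_ofReal (by linarith)]; ring
      calc (∫ y in Ioo 0 l ∩ Ioo (x - δ) (x + δ), (u x - u y) ^ 2 / (x - y) ^ 2)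
          ≤ ‖∫ y in Ioo 0 l ∩ Ioo (x - δ) (x + δ), (u x - u y) ^ 2 / (x - y) ^ 2‖ :=
            le_abs_self _
      _ ≤ Lam ^ 2 * (volume (Ioo 0 l ∩ Ioo (x - δ) (x + δ))).toReal := h1
      _ ≤ Lam ^ 2 * (2 * δ) := by
          apply mul_le_mul_of_nonneg_left h2 (by positivity)
    have hBsub : Ioo 0 l \ Ioo (x - δ) (x + δ) ⊆ Iic (x - δ) ∪ Ici (x + δ) := by
      rintro y ⟨hy1, hy2⟩
      rw [mem_Ioo, not_and_or, not_lt, not_lt] at hy2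
      rcases hy2 with h | h
      · exact Or.inl h
      · exact Or.inr h
    have hdisj : Disjoint (Iic (x - δ)) (Ici (x + δ)) :=
      Iic_disjoint_Ici.mpr (by intro h; linarith)
    have hφint : IntegrableOn (fun y : ℝ => (Lam * δ) ^ 2 / (y - x) ^ 2)
        (Iic (x - δ) ∪ Ici (x + δ)) :=
      (left_tail hδ x).1.union (right_tail hδ x).1
    have hφval : (∫ y in Iic (x - δ) ∪ Ici (x + δ), (Lam * δ) ^ 2 / (y - x) ^ 2)
        = 2 * (Lam * δ) ^ 2 / δ := by
      rw [setIntegral_union hdisj measurableSet_Ici (left_tail hδ x).1 (right_tail hδ x).1,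
        (left_tail hδ x).2, (right_tail hδ x).2]
      ring
    have hB : (∫ y in Ioo 0 l \ Ioo (x - δ) (x + δ), (u x - u y) ^ 2 / (x - y) ^ 2)
        ≤ 2 * (Lam * δ) ^ 2 / δ := by
      have step1 : (∫ y in Ioo 0 l \ Ioo (x - δ) (x + δ), (u x - u y) ^ 2 / (x - y) ^ 2)
          ≤ ∫ y in Ioo 0 l \ Ioo (x - δ) (x + δ), (Lam * δ) ^ 2 / (y - x) ^ 2 := by
        apply setIntegral_mono_on ((hIntg x).mono_set diff_subset)
          (hφint.mono_set hBsub) (measurableSet_Ioo.diff measurableSet_Ioo)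
        intro y hy
        have hyy : δ ≤ |y - x| := by
          rcases hBsub hy with h | h
          · rw [mem_Iic] at h; rw [abs_of_nonpos (by linarith)]; linarith
          · rw [mem_Ici] at h; rw [abs_of_nonneg (by linarith)]; linarith
        have hy2 : (0:ℝ) < (y - x) ^ 2 := by
          have : (0:ℝ) < |y - x| := lt_of_lt_of_le hδ hyy
          rw [← sq_abs]; positivity
        rw [show (x - y) ^ 2 = (y - x) ^ 2 by ring]
        exact (div_le_div_iff_of_pos_right hy2).mpr (hgM x y)
      have step2 : (∫ y in Ioo 0 l \ Ioo (x - δ) (x + δ), (Lam * δ) ^ 2 / (y - x) ^ 2)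
          ≤ ∫ y in Iic (x - δ) ∪ Ici (x + δ), (Lam * δ) ^ 2 / (y - x) ^ 2 := by
        apply setIntegral_mono_set hφint
          (ae_of_all _ fun y => div_nonneg (sq_nonneg _) (sq_nonneg _))
          (HasSubset.Subset.eventuallyLE hBsub)
      linarith [hφval ▸ step2, step1]
    have hcomb : (∫ y in Ioo 0 l, (u x - u y) ^ 2 / (x - y) ^ 2)
        ≤ Lam ^ 2 * (2 * δ) + 2 * (Lam * δ) ^ 2 / δ := by
      rw [← hsplit]; exact add_le_add hA hB
    have : Lam ^ 2 * (2 * δ) + 2 * (Lam * δ) ^ 2 / δ = 4 * Lam ^ 2 * δ := by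
      field_simp
      ring
    linarith
  have hFmeas : AEStronglyMeasurable (fun x => ∫ y in Ioo 0 l, (u x - u y) ^ 2 / (x - y) ^ 2)
      (volume.restrict (Ioo 0 l)) := by
    have h1 : StronglyMeasurable (fun p : ℝ × ℝ => (u p.1 - u p.2) ^ 2 / (p.1 - p.2) ^ 2) :=
      hmeasg.stronglyMeasurable
    exact (h1.integral_prod_right' (ν := volume.restrict (Ioo 0 l))).aestronglyMeasurable.restrict
  have hE : (∫ x in Ioo 0 l, ∫ y in Ioo 0 l, (u x - u y) ^ 2 / (x - y) ^ 2)
      ≤ 4 * Lam ^ 2 * δ * l := by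
    have h1 : ‖∫ x in Ioo 0 l, ∫ y in Ioo 0 l, (u x - u y) ^ 2 / (x - y) ^ 2‖
        ≤ 4 * Lam ^ 2 * δ * (volume (Ioo 0 l)).toReal := by
      apply norm_setIntegral_le_of_norm_le_const measure_Ioo_lt_top
      intro x _
      rw [Real.norm_eq_abs, abs_of_nonneg (integral_nonneg fun y => hg0 x y)]
      exact hF x
    rw [Real.volume_Ioo, ENNReal.toReal_ofReal (by linarith), sub_zero] at h1
    exact le_trans (le_abs_self _) h1
  -- conclusion
  have hmem : (1 / l) * (∫ x in Ioo 0 l, ∫ y in Ioo 0 l, (u x - u y) ^ 2 / (x - y) ^ 2)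
      ∈ {e : ℝ | ∃ u : ℝ → ℝ, AdmissibleDispl lam Lam δ l u ∧
        e = (1 / l) * ∫ x in Set.Ioo (0:ℝ) l, ∫ y in Set.Ioo (0:ℝ) l,
          (u x - u y) ^ 2 / (x - y) ^ 2} := ⟨u, hadm, rfl⟩
  have hbdd : BddBelow {e : ℝ | ∃ u : ℝ → ℝ, AdmissibleDispl lam Lam δ l u ∧
        e = (1 / l) * ∫ x in Set.Ioo (0:ℝ) l, ∫ y in Set.Ioo (0:ℝ) l,
          (u x - u y) ^ 2 / (x - y) ^ 2} := by
    refine ⟨0, ?_⟩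
    rintro e ⟨v, _, rfl⟩
    have h1 : 0 ≤ ∫ x in Ioo (0:ℝ) l, ∫ y in Ioo (0:ℝ) l, (v x - v y) ^ 2 / (x - y) ^ 2 :=
      integral_nonneg fun x => integral_nonneg fun y => div_nonneg (sq_nonneg _) (sq_nonneg _)
    positivity
  have hfin : (1 / l) * (∫ x in Ioo 0 l, ∫ y in Ioo 0 l, (u x - u y) ^ 2 / (x - y) ^ 2)
      ≤ 4 * Lam ^ 2 * δ := by
    have h2 := mul_le_mul_of_nonneg_left hE (by positivity : (0:ℝ) ≤ 1 / l)
    calc (1 / l) * (∫ x in Ioo 0 l, ∫ y in Ioo 0 l, (u x - u y) ^ 2 / (x - y) ^ 2)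
        ≤ (1 / l) * (4 * Lam ^ 2 * δ * l) := h2
    _ = 4 * Lam ^ 2 * δ := by field_simp
  exact le_trans (csInf_le hbdd hmem) hfin
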